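/- Let ℓ ≥ 1 and let A be the ℓ×ℓ real matrix with A(x,x) = 2, A(x,y) = −1 if |x−y| = 1, and A(x,y) = 0 otherwise (the Dirichlet discrete Laplacian on {1,…,ℓ}). Then for every t > 0 the matrix e^{tA} − Id is positive definite, and every diagonal entry of (e^{tA} − Id)^{−1} is at most (π²/12)·(ℓ+1)/t. -/

import Mathlib

noncomputable section

open Real Finset Matrix


/-- The Dirichlet discrete Laplacian on `{1,…,ℓ}`: `A(x,x) = 2`, `A(x,y) = −1` if
`|x−y| = 1`, and `A(x,y) = 0` otherwise. -/
def DirLap (ℓ : ℕ) : Matrix (Fin ℓ) (Fin ℓ) ℝ :=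
  Matrix.of fun x y =>
    if x = y then 2 else if (((x : ℕ) : ℤ) - ((y : ℕ) : ℤ)).natAbs = 1 then -1 else 0



lemma cos_sum_range (L k : ℕ) (hL : 1 ≤ L) (h1 : 1 ≤ k) (h2 : k < 2 * L) :
    ∑ x ∈ Finset.range L, Real.cos ((k : ℝ) * Real.pi * x / L) =
      if Even k then 0 else 1 := by
  have hL0 : (L : ℝ) ≠ 0 := by positivity
  set φ : ℝ := (k : ℝ) * Real.pi / L with hφ
  have hφpos : 0 < φ := by
    have : (0:ℝ) < (k:ℝ) * Real.pi := by positivity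
    positivity
  have hφlt : φ < 2 * Real.pi := by
    rw [hφ, div_lt_iff₀ (by positivity)]
    have : (k : ℝ) < 2 * L := by exact_mod_cast h2
    nlinarith [Real.pi_pos]
  set ω : ℂ := Complex.exp (φ * Complex.I) with hω
  have hω1 : ω ≠ 1 := by
    rw [hω, Ne, Complex.exp_eq_one_iff]
    rintro ⟨n, hn⟩
    have hn' : (φ : ℂ) * Complex.I = (n * (2 * Real.pi)) * Complex.I := by
      rw [hn]; push_cast; ring
    have := mul_right_cancel₀ Complex.I_ne_zero hn'
    have h3 : φ = (n : ℝ) * (2 * Real.pi) := by exact_mod_cast this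
    rcases lt_trichotomy (n : ℝ) 0 with h | h | h
    · nlinarith [Real.pi_pos]
    · rw [h] at h3; simp at h3; linarith
    · have : (1:ℝ) ≤ (n:ℝ) := by exact_mod_cast (by exact_mod_cast h : (0:ℤ) < n)
      nlinarith [Real.pi_pos]
  have hpow : ∀ x : ℕ, ω ^ x = Complex.exp (((x : ℝ) * φ : ℝ) * Complex.I) := by
    intro x
    rw [hω, ← Complex.exp_nat_mul]
    congr 1
    push_cast
    ring
  have hre : ∀ x : ℕ, Real.cos ((k : ℝ) * Real.pi * x / L) = (ω ^ x).re := by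
    intro x
    rw [hpow, Complex.exp_ofReal_mul_I_re]
    congr 1
    rw [hφ]
    field_simp
  have hgeom : ∑ x ∈ Finset.range L, ω ^ x = (ω ^ L - 1) / (ω - 1) := geom_sum_eq hω1 L
  have hωL : ω ^ L = (-1 : ℂ) ^ k := by
    rw [hpow]
    have : ((L : ℝ) * φ : ℝ) = (k : ℝ) * Real.pi := by rw [hφ]; field_simp
    rw [this]
    rw [show ((((k:ℝ) * Real.pi : ℝ)) : ℂ) * Complex.I = (k : ℕ) * ((Real.pi : ℂ) * Complex.I) by
      push_cast; ring, Complex.exp_nat_mul, Complex.exp_pi_mul_I]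
  have key : (∑ x ∈ Finset.range L, ω ^ x).re = if Even k then 0 else 1 := by
    rw [hgeom, hωL]
    rcases Nat.even_or_odd k with he | ho
    · rw [if_pos he, he.neg_one_pow]
      simp
    · rw [if_neg (Nat.not_even_iff_odd.2 ho), ho.neg_one_pow]
      have hcos : Real.cos φ ≠ 1 := by
        intro hc
        rcases Real.cos_eq_one_iff_of_lt_of_lt (by linarith : -(2*Real.pi) < φ) hφlt |>.1 hc with h
        · linarith
      have hωre : ω.re = Real.cos φ := by
        rw [hω, Complex.exp_ofReal_mul_I_re]
      have hωim : ω.im = Real.sin φ := by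
        rw [hω]
        simpa using Complex.exp_ofReal_mul_I_im φ
      have hns : Complex.normSq (ω - 1) = 2 - 2 * Real.cos φ := by
        rw [Complex.normSq_apply]
        simp [Complex.sub_re, Complex.sub_im, hωre, hωim]
        nlinarith [Real.sin_sq_add_cos_sq φ]
      have hns0 : Complex.normSq (ω - 1) ≠ 0 := by
        rw [hns]; intro h; apply hcos; linarith
      rw [Complex.div_re]
      simp only [Complex.sub_re, Complex.sub_im, Complex.neg_re, Complex.one_re,
        Complex.neg_im, Complex.one_im, hωre, hωim, neg_zero, sub_zero]
      rw [hns]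
      have hden : 2 - 2 * Real.cos φ ≠ 0 := fun h => hcos (by linarith)
      field_simp
      ring
  rw [← key, Complex.re_sum]
  exact Finset.sum_congr rfl fun x _ => hre x


lemma cos_sum_fin (ℓ k : ℕ) (h1 : 1 ≤ k) (h2 : k < 2 * (ℓ + 1)) :
    ∑ x ∈ Finset.range ℓ, Real.cos ((k : ℝ) * Real.pi * ((x : ℝ) + 1) / ((ℓ : ℝ) + 1)) =
      if Even k then -1 else 0 := by
  have h := cos_sum_range (ℓ + 1) k (Nat.le_add_left 1 ℓ) h1 h2
  rw [Finset.sum_range_succ'] at h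
  push_cast at h
  norm_num at h
  rcases Nat.even_or_odd k with he | ho
  · rw [if_pos he]; rw [if_pos he] at h; linarith
  · rw [if_neg (Nat.not_even_iff_odd.2 ho)]; rw [if_neg (Nat.not_even_iff_odd.2 ho)] at h
    linarith

lemma hprod (a b : ℝ) : Real.sin a * Real.sin b = (Real.cos (a - b) - Real.cos (a + b)) / 2 := by
  have := Real.cos_sub_cos (a - b) (a + b)
  have h1 : ((a - b) + (a + b)) / 2 = a := by ring
  have h2 : ((a - b) - (a + b)) / 2 = -b := by ring
  rw [h1, h2, Real.sin_neg] at this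
  linarith

lemma sin_orth_ne (ℓ : ℕ) (m n : Fin ℓ) (hlt : (n : ℕ) < m) :
    ∑ x : Fin ℓ, Real.sin (((m : ℕ) + 1) * Real.pi * ((x : ℕ) + 1) / (ℓ + 1)) *
        Real.sin (((n : ℕ) + 1) * Real.pi * ((x : ℕ) + 1) / (ℓ + 1)) = 0 := by
  have key : ∀ x : Fin ℓ,
      Real.sin (((m : ℕ) + 1) * Real.pi * ((x : ℕ) + 1) / (ℓ + 1)) *
        Real.sin (((n : ℕ) + 1) * Real.pi * ((x : ℕ) + 1) / (ℓ + 1)) =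
      (Real.cos ((((m : ℕ) - (n : ℕ) : ℕ) : ℝ) * Real.pi * ((x : ℕ) + 1) / (ℓ + 1)) -
        Real.cos ((((m : ℕ) + (n : ℕ) + 2 : ℕ) : ℝ) * Real.pi * ((x : ℕ) + 1) / (ℓ + 1))) / 2 := by
    intro x
    rw [hprod]
    congr 2
    · rw [Nat.cast_sub hlt.le]; ring
    · push_cast; ring
  rw [Finset.sum_congr rfl fun x _ => key x]
  rw [Fin.sum_univ_eq_sum_range (fun x =>
      (Real.cos ((((m : ℕ) - (n : ℕ) : ℕ) : ℝ) * Real.pi * ((x : ℕ) + 1) / (ℓ + 1)) -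
        Real.cos ((((m : ℕ) + (n : ℕ) + 2 : ℕ) : ℝ) * Real.pi * ((x : ℕ) + 1) / (ℓ + 1))) / 2)]
  have hm := m.isLt
  have hn := n.isLt
  rw [← Finset.sum_div, Finset.sum_sub_distrib,
    cos_sum_fin ℓ ((m : ℕ) - (n : ℕ)) (by omega) (by omega),
    cos_sum_fin ℓ ((m : ℕ) + (n : ℕ) + 2) (by omega) (by omega)]
  have hpar : Even ((m : ℕ) - (n : ℕ)) ↔ Even ((m : ℕ) + (n : ℕ) + 2) := by
    simp only [Nat.even_iff]; omega
  by_cases he : Even ((m : ℕ) - (n : ℕ))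
  · rw [if_pos he, if_pos (hpar.1 he)]; norm_num
  · rw [if_neg he, if_neg (fun h => he (hpar.2 h))]; norm_num

lemma sin_orth (ℓ : ℕ) (m n : Fin ℓ) :
    ∑ x : Fin ℓ, Real.sin (((m : ℕ) + 1) * Real.pi * ((x : ℕ) + 1) / (ℓ + 1)) *
        Real.sin (((n : ℕ) + 1) * Real.pi * ((x : ℕ) + 1) / (ℓ + 1)) =
      if m = n then ((ℓ : ℝ) + 1) / 2 else 0 := by
  by_cases hmn : m = n
  · subst hmn
    rw [if_pos rfl]
    have key : ∀ x : Fin ℓ,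
        Real.sin (((m : ℕ) + 1) * Real.pi * ((x : ℕ) + 1) / (ℓ + 1)) *
        Real.sin (((m : ℕ) + 1) * Real.pi * ((x : ℕ) + 1) / (ℓ + 1)) =
        (1 - Real.cos (((2 * (m : ℕ) + 2 : ℕ) : ℝ) * Real.pi * ((x : ℕ) + 1) / (ℓ + 1))) / 2 := by
      intro x
      rw [hprod]
      congr 2
      · rw [sub_self, Real.cos_zero]
      · push_cast; ring
    rw [Finset.sum_congr rfl fun x _ => key x]
    rw [Fin.sum_univ_eq_sum_range (fun x =>
        (1 - Real.cos (((2 * (m : ℕ) + 2 : ℕ) : ℝ) * Real.pi * ((x : ℕ) + 1) / (ℓ + 1))) / 2)]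
    have hm := m.isLt
    rw [← Finset.sum_div, Finset.sum_sub_distrib,
      cos_sum_fin ℓ (2 * (m : ℕ) + 2) (by omega) (by omega), if_pos ⟨(m:ℕ)+1, by omega⟩]
    simp
  · rw [if_neg hmn]
    rcases Nat.lt_or_ge (n : ℕ) (m : ℕ) with h | h
    · exact sin_orth_ne ℓ m n h
    · have hlt : (m : ℕ) < (n : ℕ) := by
        rcases Nat.lt_or_ge (m : ℕ) (n : ℕ) with h' | h'
        · exact h'
        · exact absurd (Fin.ext (by omega : (m : ℕ) = (n : ℕ))) hmn
      rw [Finset.sum_congr rfl fun x _ => mul_comm _ _]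
      exact sin_orth_ne ℓ n m hlt



noncomputable def sineP (ℓ : ℕ) : Matrix (Fin ℓ) (Fin ℓ) ℝ :=
  Matrix.of fun x m => Real.sqrt (2 / ((ℓ : ℝ) + 1)) *
    Real.sin (((m : ℕ) + 1) * Real.pi * ((x : ℕ) + 1) / ((ℓ : ℝ) + 1))

noncomputable def dvec (ℓ : ℕ) (m : Fin ℓ) : ℝ :=
  2 * (1 - Real.cos (((m : ℕ) + 1) * Real.pi / ((ℓ : ℝ) + 1)))

lemma sineP_orth (ℓ : ℕ) : (sineP ℓ)ᵀ * sineP ℓ = 1 := by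
  ext m n
  rw [Matrix.mul_apply, Matrix.one_apply]
  have hc : Real.sqrt (2 / ((ℓ : ℝ) + 1)) * Real.sqrt (2 / ((ℓ : ℝ) + 1)) = 2 / ((ℓ : ℝ) + 1) :=
    Real.mul_self_sqrt (by positivity)
  have : ∀ x : Fin ℓ, (sineP ℓ)ᵀ m x * sineP ℓ x n = (2 / ((ℓ : ℝ) + 1)) *
      (Real.sin (((m : ℕ) + 1) * Real.pi * ((x : ℕ) + 1) / (ℓ + 1)) *
        Real.sin (((n : ℕ) + 1) * Real.pi * ((x : ℕ) + 1) / (ℓ + 1))) := by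
    intro x
    simp only [Matrix.transpose_apply, sineP, Matrix.of_apply]
    rw [mul_mul_mul_comm, hc]
  rw [Finset.sum_congr rfl fun x _ => this x, ← Finset.mul_sum, sin_orth ℓ m n]
  by_cases hmn : m = n
  · rw [if_pos hmn, if_pos hmn]
    have : ((ℓ : ℝ) + 1) ≠ 0 := by positivity
    field_simp
  · rw [if_neg hmn, if_neg hmn, mul_zero]

lemma indicator_sum (ℓ : ℕ) (x : Fin ℓ) (f : ℕ → ℝ) (hf0 : f 0 = 0) (hfL : f (ℓ + 1) = 0) :
    ∑ y : Fin ℓ, (if (((x : ℕ) : ℤ) - ((y : ℕ) : ℤ)).natAbs = 1 then f ((y : ℕ) + 1) else 0) =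
      f (x : ℕ) + f ((x : ℕ) + 2) := by
  rw [Fin.sum_univ_eq_sum_range (fun y => if (((x : ℕ) : ℤ) - (y : ℤ)).natAbs = 1 then f (y + 1) else 0)]
  have split : ∀ y ∈ Finset.range ℓ,
      (if (((x : ℕ) : ℤ) - (y : ℤ)).natAbs = 1 then f (y + 1) else 0) =
      (if y + 1 = (x : ℕ) then f (y + 1) else 0) + (if y = (x : ℕ) + 1 then f (y + 1) else 0) := by
    intro y _
    split_ifs with h1 h2 h3 h4 h5 <;> first | omega | simp | (exfalso; omega)
  rw [Finset.sum_congr rfl split, Finset.sum_add_distrib]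
  have hx := x.isLt
  congr 1
  · rcases Nat.eq_zero_or_pos (x : ℕ) with h0 | hpos
    · rw [h0, hf0]
      exact Finset.sum_eq_zero fun y _ => if_neg (by omega)
    · obtain ⟨k, hk⟩ : ∃ k, (x : ℕ) = k + 1 := ⟨(x : ℕ) - 1, by omega⟩
      rw [hk]
      have : ∀ y ∈ Finset.range ℓ, (if y + 1 = k + 1 then f (y + 1) else 0) =
          (if y = k then f (y + 1) else 0) := by
        intro y _; exact if_congr (by omega) rfl rfl
      rw [Finset.sum_congr rfl this, Finset.sum_ite_eq' (Finset.range ℓ) k (fun y => f (y + 1)),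
        if_pos (Finset.mem_range.2 (by omega))]
  · rw [Finset.sum_ite_eq' (Finset.range ℓ) ((x : ℕ) + 1) (fun y => f (y + 1))]
    by_cases h : (x : ℕ) + 1 < ℓ
    · rw [if_pos (Finset.mem_range.2 h)]
    · rw [if_neg (fun hm => h (Finset.mem_range.1 hm))]
      have : (x : ℕ) + 2 = ℓ + 1 := by omega
      rw [this, hfL]

lemma dirLap_mul_sineP (ℓ : ℕ) : DirLap ℓ * sineP ℓ = sineP ℓ * Matrix.diagonal (dvec ℓ) := by
  ext x m
  rw [Matrix.mul_apply, Matrix.mul_diagonal]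
  set c := Real.sqrt (2 / ((ℓ : ℝ) + 1)) with hcdef
  set a := ((m : ℕ) + 1) * Real.pi / ((ℓ : ℝ) + 1) with hadef
  set f : ℕ → ℝ := fun j => c * Real.sin (a * j) with hfdef
  have hP : ∀ y : Fin ℓ, sineP ℓ y m = f ((y : ℕ) + 1) := by
    intro y
    simp only [hfdef, sineP, Matrix.of_apply, hadef]
    congr 2
    push_cast
    ring
  have hf0 : f 0 = 0 := by simp [hfdef]
  have hfL : f (ℓ + 1) = 0 := by
    simp only [hfdef, hadef]
    have : ((m : ℕ) + 1) * Real.pi / ((ℓ : ℝ) + 1) * ((ℓ : ℕ) + 1 : ℕ) = ((m : ℕ) + 1 : ℕ) * Real.pi := by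
      push_cast
      have : ((ℓ : ℝ) + 1) ≠ 0 := by positivity
      field_simp
    rw [this, Real.sin_nat_mul_pi, mul_zero]
  have expand : ∀ y : Fin ℓ, DirLap ℓ x y * sineP ℓ y m =
      (if x = y then 2 * f ((y : ℕ) + 1) else 0) -
      (if (((x : ℕ) : ℤ) - ((y : ℕ) : ℤ)).natAbs = 1 then f ((y : ℕ) + 1) else 0) := by
    intro y
    rw [hP]
    simp only [DirLap, Matrix.of_apply]
    split_ifs with h1 h2 h3 <;> first | (subst h1; exfalso; omega) | ring | (exfalso; omega)
  rw [Finset.sum_congr rfl fun y _ => expand y, Finset.sum_sub_distrib,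
    Finset.sum_ite_eq Finset.univ x (fun y => 2 * f ((y : ℕ) + 1)), if_pos (Finset.mem_univ x),
    indicator_sum ℓ x f hf0 hfL, hP x]
  -- now pure trig
  simp only [hfdef, dvec]
  have hd : Real.cos (((m : ℕ) + 1) * Real.pi / ((ℓ : ℝ) + 1)) = Real.cos a := by rw [hadef]
  rw [hd]
  have e1 : a * ((x : ℕ) : ℝ) = a * (((x : ℕ) : ℝ) + 1) - a := by ring
  have e2 : a * (((x : ℕ) + 2 : ℕ) : ℝ) = a * (((x : ℕ) : ℝ) + 1) + a := by push_cast; ring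
  have e3 : a * (((x : ℕ) + 1 : ℕ) : ℝ) = a * (((x : ℕ) : ℝ) + 1) := by push_cast; ring
  rw [e1, e2, e3, Real.sin_sub, Real.sin_add]
  ring






lemma posdef_conj {n : Type*} [Fintype n] [DecidableEq n] (P D : Matrix n n ℝ)
    (hD : D.PosDef) (h2 : P * Pᵀ = 1) : (P * D * Pᵀ).PosDef := by
  rw [Matrix.posDef_iff_dotProduct_mulVec]
  constructor
  · have hDsym : Dᵀ = D := hD.1
    show (P * D * Pᵀ)ᴴ = P * D * Pᵀ
    rw [Matrix.conjTranspose_eq_transpose_of_trivial, Matrix.transpose_mul, Matrix.transpose_mul,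
      Matrix.transpose_transpose, hDsym, Matrix.mul_assoc]
  · intro x hx
    have key : star x ⬝ᵥ ((P * D * Pᵀ) *ᵥ x) = star (Pᵀ *ᵥ x) ⬝ᵥ (D *ᵥ (Pᵀ *ᵥ x)) := by
      rw [star_trivial, star_trivial, ← Matrix.mulVec_mulVec, ← Matrix.mulVec_mulVec,
        Matrix.dotProduct_mulVec x P, Matrix.mulVec_transpose]
    rw [key]
    apply (Matrix.posDef_iff_dotProduct_mulVec.mp hD).2
    intro hy
    apply hx
    have : P *ᵥ (Pᵀ *ᵥ x) = x := by
      rw [Matrix.mulVec_mulVec, h2, Matrix.one_mulVec]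
    rw [← this, hy, Matrix.mulVec_zero]

lemma basel_partial (N : ℕ) : ∑ n ∈ Finset.range N, 1 / ((n : ℝ) + 1) ^ 2 ≤ Real.pi ^ 2 / 6 := by
  have h := hasSum_zeta_two
  have hle := sum_le_hasSum (Finset.range (N + 1)) (fun i _ => by positivity) h
  rw [Finset.sum_range_succ'] at hle
  norm_num at hle
  simpa only [one_div] using hle


/-- For all `t > 0` the matrix `e^{tA} − Id` is positive definite and
each diagonal entry of its inverse is at most `(π²/12)(ℓ+1)/t`. -/
theorem exp_dirichlet_laplacian_diagonal_bound (ℓ : ℕ) (hℓ : 1 ≤ ℓ) (t : ℝ) (ht : 0 < t) :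
    (NormedSpace.exp (t • DirLap ℓ) - 1).PosDef ∧
      ∀ x : Fin ℓ,
        (NormedSpace.exp (t • DirLap ℓ) - 1)⁻¹ x x ≤
          Real.pi ^ 2 / 12 * ((ℓ : ℝ) + 1) / t := by
  have hL : (0 : ℝ) < (ℓ : ℝ) + 1 := by positivity
  set P := sineP ℓ with hPdef
  set d := dvec ℓ with hddef
  have h1 : Pᵀ * P = 1 := sineP_orth ℓ
  have h2 : P * Pᵀ = 1 := mul_eq_one_comm.mp h1
  have hPunit : IsUnit P := ⟨⟨P, Pᵀ, h2, h1⟩, rfl⟩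
  have hPinv : P⁻¹ = Pᵀ := Matrix.inv_eq_right_inv h2
  -- lower bound on eigenvalues
  have hd_lb : ∀ m : Fin ℓ, 4 * (((m : ℕ) : ℝ) + 1) ^ 2 / ((ℓ : ℝ) + 1) ^ 2 ≤ d m := by
    intro m
    have hmlt : ((m : ℕ) : ℝ) + 1 ≤ (ℓ : ℝ) := by
      have := m.isLt; exact_mod_cast Nat.succ_le_of_lt this
    set a := (((m : ℕ) : ℝ) + 1) * Real.pi / ((ℓ : ℝ) + 1) with hadef
    have hapos : 0 < a := by
      have : (0:ℝ) < (((m : ℕ) : ℝ) + 1) * Real.pi := by positivity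
      positivity
    have hale : a / 2 ≤ Real.pi / 2 := by
      rw [hadef, div_le_div_iff₀ (by positivity) (by norm_num)]
      rw [div_mul_eq_mul_div, div_le_iff₀ hL]
      nlinarith [Real.pi_pos]
    have hj := Real.mul_le_sin (by positivity : (0:ℝ) ≤ a / 2) hale
    have hq : 2 / Real.pi * (a / 2) = (((m : ℕ) : ℝ) + 1) / ((ℓ : ℝ) + 1) := by
      rw [hadef]
      field_simp
    rw [hq] at hj
    have hcos : Real.cos a = 1 - 2 * Real.sin (a / 2) ^ 2 := by
      have hc2 := Real.cos_two_mul' (a / 2)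
      rw [show 2 * (a / 2) = a by ring] at hc2
      have hsc := Real.sin_sq_add_cos_sq (a / 2)
      linarith
    have hdm : d m = 4 * Real.sin (a / 2) ^ 2 := by
      rw [hddef]
      show 2 * (1 - Real.cos ((((m : ℕ) : ℝ) + 1) * Real.pi / ((ℓ : ℝ) + 1))) = _
      rw [← hadef, hcos]
      ring
    rw [hdm]
    have hqnn : (0:ℝ) ≤ (((m : ℕ) : ℝ) + 1) / ((ℓ : ℝ) + 1) := by positivity
    have hsq : ((((m : ℕ) : ℝ) + 1) / ((ℓ : ℝ) + 1)) ^ 2 ≤ Real.sin (a / 2) ^ 2 := by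
      nlinarith
    calc 4 * (((m : ℕ) : ℝ) + 1) ^ 2 / ((ℓ : ℝ) + 1) ^ 2
        = 4 * ((((m : ℕ) : ℝ) + 1) / ((ℓ : ℝ) + 1)) ^ 2 := by field_simp
      _ ≤ 4 * Real.sin (a / 2) ^ 2 := by linarith
  have hd_pos : ∀ m : Fin ℓ, 0 < d m := fun m =>
    lt_of_lt_of_le (by positivity) (hd_lb m)
  -- diagonalization
  have hA : DirLap ℓ = P * Matrix.diagonal d * Pᵀ := by
    calc DirLap ℓ = DirLap ℓ * (P * Pᵀ) := by rw [h2, Matrix.mul_one]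
      _ = (DirLap ℓ * P) * Pᵀ := by rw [Matrix.mul_assoc]
      _ = P * Matrix.diagonal d * Pᵀ := by rw [dirLap_mul_sineP]
  set e : Fin ℓ → ℝ := fun m => Real.exp (t * d m) - 1 with hedef
  have he_pos : ∀ m : Fin ℓ, 0 < e m := by
    intro m
    have : (1:ℝ) < Real.exp (t * d m) := by
      rw [Real.one_lt_exp_iff]
      exact mul_pos ht (hd_pos m)
    simp only [hedef]
    linarith
  -- exponential
  have hexp : NormedSpace.exp (t • DirLap ℓ) =
      P * Matrix.diagonal (fun m => Real.exp (t * d m)) * Pᵀ := by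
    rw [hA]
    have hsmul : t • (P * Matrix.diagonal d * Pᵀ) = P * Matrix.diagonal (t • d) * Pᵀ := by
      rw [Matrix.diagonal_smul, ← Matrix.smul_mul, ← Matrix.mul_smul]
    rw [hsmul, ← hPinv, Matrix.exp_conj P (Matrix.diagonal (t • d)) hPunit,
      Matrix.exp_diagonal, hPinv]
    congr 2
    funext m
    rw [Pi.exp_def]
    simp only [Pi.smul_apply, smul_eq_mul]
    rw [← Real.exp_eq_exp_ℝ]
  have hE : NormedSpace.exp (t • DirLap ℓ) - 1 = P * Matrix.diagonal e * Pᵀ := by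
    rw [hexp]
    conv_lhs => rw [show (1 : Matrix (Fin ℓ) (Fin ℓ) ℝ) = P * 1 * Pᵀ by rw [Matrix.mul_one, h2]]
    rw [← Matrix.sub_mul, ← Matrix.mul_sub, ← Matrix.diagonal_one, Matrix.diagonal_sub]
  constructor
  · rw [hE]
    exact posdef_conj P (Matrix.diagonal e) (Matrix.PosDef.diagonal he_pos) h2
  · intro x
    have hEinv : (NormedSpace.exp (t • DirLap ℓ) - 1)⁻¹ =
        P * Matrix.diagonal (fun m => (e m)⁻¹) * Pᵀ := by
      apply Matrix.inv_eq_right_inv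
      rw [hE]
      simp only [Matrix.mul_assoc]
      rw [show Pᵀ * (P * (Matrix.diagonal (fun m => (e m)⁻¹) * Pᵀ)) =
          Matrix.diagonal (fun m => (e m)⁻¹) * Pᵀ by rw [← Matrix.mul_assoc, h1, Matrix.one_mul]]
      rw [← Matrix.mul_assoc (Matrix.diagonal e), Matrix.diagonal_mul_diagonal]
      rw [show (fun m => e m * (e m)⁻¹) = fun _ : Fin ℓ => (1:ℝ) by
        funext m; exact mul_inv_cancel₀ (he_pos m).ne']
      rw [Matrix.diagonal_one, Matrix.one_mul]
      exact h2
    rw [hEinv]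
    have hdiag : (P * Matrix.diagonal (fun m => (e m)⁻¹) * Pᵀ) x x =
        ∑ m : Fin ℓ, (e m)⁻¹ * (P x m) ^ 2 := by
      rw [Matrix.mul_apply]
      apply Finset.sum_congr rfl
      intro m _
      rw [Matrix.mul_diagonal, Matrix.transpose_apply]
      ring
    rw [hdiag]
    have hP2 : ∀ m : Fin ℓ, (P x m) ^ 2 ≤ 2 / ((ℓ : ℝ) + 1) := by
      intro m
      show (Real.sqrt (2 / ((ℓ : ℝ) + 1)) *
        Real.sin (((m : ℕ) + 1) * Real.pi * ((x : ℕ) + 1) / ((ℓ : ℝ) + 1))) ^ 2 ≤ _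
      rw [mul_pow, Real.sq_sqrt (by positivity : (0:ℝ) ≤ 2 / ((ℓ : ℝ) + 1))]
      have hs := Real.sin_sq_le_one (((m : ℕ) + 1) * Real.pi * ((x : ℕ) + 1) / ((ℓ : ℝ) + 1))
      exact mul_le_of_le_one_right (by positivity) hs
    have hterm : ∀ m : Fin ℓ, (e m)⁻¹ * (P x m) ^ 2 ≤
        ((ℓ : ℝ) + 1) / (2 * t) * (1 / (((m : ℕ) : ℝ) + 1) ^ 2) := by
      intro m
      have htd : 0 < t * d m := mul_pos ht (hd_pos m)
      have h1m : (e m)⁻¹ ≤ (t * d m)⁻¹ := by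
        apply inv_anti₀ htd
        have := Real.add_one_le_exp (t * d m)
        simp only [hedef]
        linarith
      have hlow : 0 < t * (4 * (((m : ℕ) : ℝ) + 1) ^ 2 / ((ℓ : ℝ) + 1) ^ 2) := by positivity
      have h2m : (t * d m)⁻¹ ≤ (t * (4 * (((m : ℕ) : ℝ) + 1) ^ 2 / ((ℓ : ℝ) + 1) ^ 2))⁻¹ := by
        apply inv_anti₀ hlow
        exact mul_le_mul_of_nonneg_left (hd_lb m) ht.le
      calc (e m)⁻¹ * (P x m) ^ 2 ≤ (t * d m)⁻¹ * (2 / ((ℓ : ℝ) + 1)) := by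
            apply mul_le_mul h1m (hP2 m) (sq_nonneg _) (by positivity)
        _ ≤ (t * (4 * (((m : ℕ) : ℝ) + 1) ^ 2 / ((ℓ : ℝ) + 1) ^ 2))⁻¹ * (2 / ((ℓ : ℝ) + 1)) := by
            apply mul_le_mul_of_nonneg_right h2m (by positivity)
        _ = ((ℓ : ℝ) + 1) / (2 * t) * (1 / (((m : ℕ) : ℝ) + 1) ^ 2) := by
            have hm0 : (((m : ℕ) : ℝ) + 1) ≠ 0 := by positivity
            field_simp
            ring
    calc ∑ m : Fin ℓ, (e m)⁻¹ * (P x m) ^ 2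
        ≤ ∑ m : Fin ℓ, ((ℓ : ℝ) + 1) / (2 * t) * (1 / (((m : ℕ) : ℝ) + 1) ^ 2) :=
          Finset.sum_le_sum fun m _ => hterm m
      _ = ((ℓ : ℝ) + 1) / (2 * t) * ∑ m : Fin ℓ, 1 / (((m : ℕ) : ℝ) + 1) ^ 2 := by
          rw [Finset.mul_sum]
      _ ≤ ((ℓ : ℝ) + 1) / (2 * t) * (Real.pi ^ 2 / 6) := by
          apply mul_le_mul_of_nonneg_left _ (by positivity)
          rw [Fin.sum_univ_eq_sum_range (fun n : ℕ => 1 / ((n : ℝ) + 1) ^ 2)]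
          exact basel_partial ℓ
      _ = Real.pi ^ 2 / 12 * ((ℓ : ℝ) + 1) / t := by
          field_simp
          ring

end
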